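/- Let (M_t : t ∈ [0,u]_H) be an (H,u)-decomposition of an (H,u)-perfect pseudo MV-algebra M. The following statements are equivalent: (i) M_0 is a maximal ideal of M; (ii) (H,u) is isomorphic as a unital ordered group to (ℍ,1), where ℍ is a subgroup of the additive group ℝ with 1 ∈ ℍ; (iii) M possesses a unique state s, and M_0 = Ker(s). -/

import Mathlib

open Set

namespace PseudoMV

/-! ### Basic pseudo MV-algebra notions on the interval `Γ(K,v) = [0,v]`
of a (not necessarily abelian) lattice-ordered group `K`. -/

section Defs

variable {K : Type*} [Lattice K] [AddGroup K]

/-- `v` is a strong (order) unit of `K`. -/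
def IsStrongUnit (v : K) : Prop := 0 ≤ v ∧ ∀ x : K, ∃ n : ℕ, x ≤ n • v

/-- The carrier of the pseudo MV-algebra `Γ(K,v)`. -/
def carrier (v : K) : Set K := Set.Icc 0 v

/-- `x ⊕ y = (x + y) ⊓ v`. -/
def oplus (v x y : K) : K := (x + y) ⊓ v

/-- Left negation `x⁻ = v - x`. -/
def negL (v x : K) : K := v - x

/-- Right negation `x~ = -x + v`. -/
def negR (v x : K) : K := -x + v

/-- `x ⊙ y = (x - v + y) ⊔ 0`. -/
def odot (v x y : K) : K := (x - v + y) ⊔ 0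

/-- The partial sum `x + y` is defined in `Γ(K,v)`, i.e. the group sum lies in `[0,v]`. -/
def sumDef (v x y : K) : Prop := 0 ≤ x + y ∧ x + y ≤ v

/-- `n`-fold sum `n.x = x ⊕ ⋯ ⊕ x`. -/
def nOplus (v : K) : ℕ → K → K
  | 0, _ => 0
  | n + 1, x => oplus v (nOplus v n x) x

/-- `ord(x) < ∞`, i.e. some `n ≥ 1` satisfies `n.x = 1`. -/
def OrdFinite (v x : K) : Prop := ∃ n : ℕ, 1 ≤ n ∧ nOplus v n x = v

/-- The set of infinitesimal elements: all `n`-fold partial sums `nx` are defined. -/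
def Infinit (v : K) : Set K := {x | x ∈ carrier v ∧ ∀ n : ℕ, n • x ≤ v}

/-- An ideal of `Γ(K,v)`. -/
structure IsIdeal (v : K) (I : Set K) : Prop where
  subset : I ⊆ carrier v
  nonempty : I.Nonempty
  lower : ∀ a ∈ carrier v, ∀ b ∈ I, a ≤ b → a ∈ I
  oplus_mem : ∀ a ∈ I, ∀ b ∈ I, oplus v a b ∈ I

/-- A normal ideal: `x ⊕ I = I ⊕ x` for every `x`. -/
def IsNormalIdeal (v : K) (I : Set K) : Prop :=
  IsIdeal v I ∧ ∀ x ∈ carrier v, (fun a => oplus v x a) '' I = (fun a => oplus v a x) '' I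

/-- A maximal ideal: proper and not properly contained in a proper ideal. -/
def IsMaximalIdeal (v : K) (I : Set K) : Prop :=
  IsIdeal v I ∧ I ≠ carrier v ∧ ∀ J, IsIdeal v J → I ⊆ J → J ≠ carrier v → J = I

/-- A prime ideal. -/
def IsPrimeIdeal (v : K) (I : Set K) : Prop :=
  IsIdeal v I ∧ ∀ x ∈ carrier v, ∀ y ∈ carrier v, x ⊓ y ∈ I → x ∈ I ∨ y ∈ I

/-- The radical: intersection of all maximal ideals. -/
def Rad (v : K) : Set K := ⋂₀ {I | IsMaximalIdeal v I}

/-- The normal radical: intersection of all maximal ideals that are normal. -/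
def RadN (v : K) : Set K := ⋂₀ {I | IsMaximalIdeal v I ∧ IsNormalIdeal v I}

/-- Membership in the class `𝓜`: every maximal ideal is normal. -/
def MemClassM (v : K) : Prop := ∀ I, IsMaximalIdeal v I → IsNormalIdeal v I

/-- A symmetric pseudo MV-algebra: the two negations coincide. -/
def IsSymmetric (v : K) : Prop := ∀ x ∈ carrier v, negL v x = negR v x

/-- A local pseudo MV-algebra: a unique maximal ideal, which is moreover normal. -/
def IsLocal (v : K) : Prop :=
  ∃ I, IsMaximalIdeal v I ∧ IsNormalIdeal v I ∧ ∀ J, IsMaximalIdeal v J → J = I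

/-- A state on `Γ(K,v)`. -/
structure IsState (v : K) (s : K → ℝ) : Prop where
  maps_to : ∀ x ∈ carrier v, s x ∈ Set.Icc (0 : ℝ) 1
  map_unit : s v = 1
  additive : ∀ x ∈ carrier v, ∀ y ∈ carrier v, sumDef v x y → s (x + y) = s x + s y

/-- The kernel of a state. -/
def stateKer (v : K) (s : K → ℝ) : Set K := {x | x ∈ carrier v ∧ s x = 0}

/-- `x/I = y/I` in the quotient by the (normal) ideal `I`. -/
def quotEq (v : K) (I : Set K) (x y : K) : Prop :=
  oplus v (odot v x (negL v y)) (odot v y (negL v x)) ∈ I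

/-- `x/I ≤ y/I` in the quotient by the (normal) ideal `I`. -/
def quotLE (v : K) (I : Set K) (x y : K) : Prop := odot v x (negL v y) ∈ I

/-- A commutative ideal: a normal ideal with commutative quotient. -/
def IsCommutativeIdeal (v : K) (I : Set K) : Prop :=
  IsNormalIdeal v I ∧ ∀ x ∈ carrier v, ∀ y ∈ carrier v, quotEq v I (oplus v x y) (oplus v y x)

/-- A strict ideal: `x/I < y/I` implies `x < y`. -/
def IsStrictIdeal (v : K) (I : Set K) : Prop :=
  ∀ x ∈ carrier v, ∀ y ∈ carrier v, quotLE v I x y → ¬ quotLE v I y x → x < y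

/-- A retractive (normal) ideal: the canonical projection `π_I : M → M/I` admits a
homomorphic section `δ_I` with `π_I ∘ δ_I = id`.  We encode `δ_I` by the map
`d = δ_I ∘ π_I : M → M`, which must be constant on classes, a homomorphism with respect
to the quotient operations, and a section of `π_I`. -/
def IsRetractive (v : K) (I : Set K) : Prop :=
  ∃ d : K → K,
    (∀ x ∈ carrier v, d x ∈ carrier v) ∧
    (∀ x ∈ carrier v, ∀ y ∈ carrier v, quotEq v I x y → d x = d y) ∧
    (∀ x ∈ carrier v, ∀ y ∈ carrier v, d (oplus v x y) = oplus v (d x) (d y)) ∧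
    (∀ x ∈ carrier v, d (negL v x) = negL v (d x)) ∧
    (∀ x ∈ carrier v, d (negR v x) = negR v (d x)) ∧
    d 0 = 0 ∧ d v = v ∧
    (∀ x ∈ carrier v, quotEq v I (d x) x)

/-- A lexicographic ideal: a nontrivial proper commutative ideal that is strict,
retractive and prime. -/
def IsLexIdeal (v : K) (I : Set K) : Prop :=
  IsCommutativeIdeal v I ∧ I ≠ {0} ∧ I ≠ carrier v ∧
    IsStrictIdeal v I ∧ IsRetractive v I ∧ IsPrimeIdeal v I

/-- A subalgebra of `Γ(K,v)`. -/
def IsSubalgebra (v : K) (S : Set K) : Prop :=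
  S ⊆ carrier v ∧ 0 ∈ S ∧ v ∈ S ∧
    (∀ x ∈ S, ∀ y ∈ S, oplus v x y ∈ S) ∧
    (∀ x ∈ S, negL v x ∈ S) ∧ (∀ x ∈ S, negR v x ∈ S)

/-- The subalgebra generated by a subset. -/
def genSubalg (v : K) (A : Set K) : Set K := ⋂₀ {S | IsSubalgebra v S ∧ A ⊆ S}

end Defs

/-! ### `(H,u)`-decompositions -/

section Decomp

variable {H : Type*} [AddCommGroup H] [LinearOrder H] [IsOrderedAddMonoid H]
variable {K : Type*} [Lattice K] [AddGroup K]

/-- An `(H,u)`-decomposition of the pseudo MV-algebra `Γ(K,v)`. -/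
structure IsDecomposition (u : H) (v : K) (Md : H → Set K) : Prop where
  nonempty : ∀ t ∈ Set.Icc (0 : H) u, (Md t).Nonempty
  subset : ∀ t ∈ Set.Icc (0 : H) u, Md t ⊆ carrier v
  disjoint : ∀ s ∈ Set.Icc (0 : H) u, ∀ t ∈ Set.Icc (0 : H) u, s ≠ t → Md s ∩ Md t = ∅
  cover : ∀ x ∈ carrier v, ∃ t ∈ Set.Icc (0 : H) u, x ∈ Md t
  mono : ∀ s ∈ Set.Icc (0 : H) u, ∀ t ∈ Set.Icc (0 : H) u, s < t →
    ∀ a ∈ Md s, ∀ b ∈ Md t, a ≤ b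
  negL_eq : ∀ t ∈ Set.Icc (0 : H) u, negL v '' Md t = Md (u - t)
  negR_eq : ∀ t ∈ Set.Icc (0 : H) u, negR v '' Md t = Md (u - t)
  oplus_mem : ∀ s ∈ Set.Icc (0 : H) u, ∀ t ∈ Set.Icc (0 : H) u, ∀ x ∈ Md s, ∀ y ∈ Md t,
    oplus v x y ∈ Md (min (s + t) u)

/-- A strong cyclic family for an `(H,u)`-decomposition. -/
def StrongCyclicFamily (u : H) (v : K) (Md : H → Set K) (c : H → K) : Prop :=
  (∀ t ∈ Set.Icc (0 : H) u, c t ∈ Md t ∧ ∀ x : K, c t + x = x + c t) ∧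
  (∀ s ∈ Set.Icc (0 : H) u, ∀ t ∈ Set.Icc (0 : H) u, s + t ≤ u → c s + c t = c (s + t)) ∧
  c u = v

/-- A strong `(H,u)`-perfect pseudo MV-algebra. -/
def IsStrongPerfect (u : H) (v : K) : Prop :=
  ∃ Md c, IsDecomposition u v Md ∧ StrongCyclicFamily u v Md c

/-- A weak cyclic family for an `(H,u)`-decomposition. -/
def WeakCyclicFamily (u : H) (v : K) (Md : H → Set K) (c : H → K) : Prop :=
  c 0 = 0 ∧
  (∀ t ∈ Set.Icc (0 : H) u, c t ∈ Md t ∧ ∀ x : K, c t + x = x + c t) ∧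
  (∀ s ∈ Set.Icc (0 : H) u, ∀ t ∈ Set.Icc (0 : H) u, s + t ≤ u → c s + c t = c (s + t))

end Decomp

/-! ### Isomorphisms -/

section Iso

variable {K : Type*} [Lattice K] [AddGroup K]
variable {K' : Type*} [Lattice K'] [AddGroup K']

/-- An isomorphism of the pseudo MV-algebras `Γ(K,v)` and `Γ(K',v')` (encoded as a map
`K → K'` whose restriction to `[0,v]` is a bijection onto `[0,v']` preserving all
pseudo MV-operations). -/
structure IsPMVIso (v : K) (v' : K') (f : K → K') : Prop where
  maps_to : ∀ x ∈ carrier v, f x ∈ carrier v'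
  inj : ∀ x ∈ carrier v, ∀ y ∈ carrier v, f x = f y → x = y
  surj : ∀ y ∈ carrier v', ∃ x ∈ carrier v, f x = y
  map_zero : f 0 = 0
  map_unit : f v = v'
  map_oplus : ∀ x ∈ carrier v, ∀ y ∈ carrier v, f (oplus v x y) = oplus v' (f x) (f y)
  map_negL : ∀ x ∈ carrier v, f (negL v x) = negL v' (f x)
  map_negR : ∀ x ∈ carrier v, f (negR v x) = negR v' (f x)

/-- The pseudo MV-algebras `Γ(K,v)` and `Γ(K',v')` are isomorphic. -/
def PMVIsomorphic (v : K) (v' : K') : Prop := ∃ f, IsPMVIso v v' f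

end Iso

/-- An isomorphism of lattice-ordered groups: an order isomorphism that is additive. -/
def LGroupIsomorphic (G : Type*) (G' : Type*) [Lattice G] [AddGroup G] [Lattice G']
    [AddGroup G'] : Prop :=
  ∃ e : G ≃o G', ∀ x y : G, e (x + y) = e x + e y

/-! ### The lexicographic product of a linearly ordered group and a lattice-ordered group -/

/-- The lexicographic product `H ×ₗ G`. -/
@[ext]
structure LexProd (H : Type*) (G : Type*) where
  fst : H
  snd : G

namespace LexProd

variable {H : Type*} {G : Type*}

section Group

variable [AddGroup H] [AddGroup G]

instance : Add (LexProd H G) := ⟨fun p q => ⟨p.fst + q.fst, p.snd + q.snd⟩⟩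
instance : Zero (LexProd H G) := ⟨⟨0, 0⟩⟩
instance : Neg (LexProd H G) := ⟨fun p => ⟨-p.fst, -p.snd⟩⟩

instance : AddGroup (LexProd H G) :=
  AddGroup.ofLeftAxioms (fun a b c => LexProd.ext (add_assoc _ _ _) (add_assoc _ _ _))
    (fun a => LexProd.ext (zero_add _) (zero_add _))
    (fun a => LexProd.ext (neg_add_cancel _) (neg_add_cancel _))

@[simp] lemma add_fst (p q : LexProd H G) : (p + q).fst = p.fst + q.fst := rfl
@[simp] lemma add_snd (p q : LexProd H G) : (p + q).snd = p.snd + q.snd := rfl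
@[simp] lemma zero_fst : (0 : LexProd H G).fst = 0 := rfl
@[simp] lemma zero_snd : (0 : LexProd H G).snd = 0 := rfl

end Group

section Order

variable [LinearOrder H] [Lattice G]

instance : PartialOrder (LexProd H G) where
  le p q := p.fst < q.fst ∨ (p.fst = q.fst ∧ p.snd ≤ q.snd)
  le_refl p := Or.inr ⟨rfl, le_rfl⟩
  le_trans p q r := by
    rintro (h | ⟨h1, h2⟩) (h' | ⟨h1', h2'⟩)
    · exact Or.inl (h.trans h')
    · exact Or.inl (h1' ▸ h)
    · exact Or.inl (h1 ▸ h')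
    · exact Or.inr ⟨h1.trans h1', h2.trans h2'⟩
  le_antisymm p q := by
    rintro (h | ⟨h1, h2⟩) (h' | ⟨h1', h2'⟩)
    · exact absurd (h.trans h') (lt_irrefl _)
    · exact absurd h (h1' ▸ lt_irrefl _)
    · exact absurd h' (h1 ▸ lt_irrefl _)
    · exact LexProd.ext h1 (le_antisymm h2 h2')

lemma le_def {p q : LexProd H G} :
    p ≤ q ↔ p.fst < q.fst ∨ (p.fst = q.fst ∧ p.snd ≤ q.snd) := Iff.rfl

instance : Lattice (LexProd H G) :=
  { (inferInstance : PartialOrder (LexProd H G)) with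
    sup := fun p q =>
      if p.fst < q.fst then q else if q.fst < p.fst then p else ⟨p.fst, p.snd ⊔ q.snd⟩
    inf := fun p q =>
      if p.fst < q.fst then p else if q.fst < p.fst then q else ⟨p.fst, p.snd ⊓ q.snd⟩
    le_sup_left := fun p q => by
      try dsimp only
      split_ifs with h1 h2
      · exact Or.inl h1
      · exact le_rfl
      · exact Or.inr ⟨rfl, le_sup_left⟩
    le_sup_right := fun p q => by
      try dsimp only
      split_ifs with h1 h2
      · exact le_rfl
      · exact Or.inl h2
      · exact Or.inr ⟨le_antisymm (not_lt.mp h1) (not_lt.mp h2), le_sup_right⟩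
    sup_le := fun p q r hp hq => by
      try dsimp only
      split_ifs with h1 h2
      · exact hq
      · exact hp
      · have hfq : p.fst = q.fst := le_antisymm (not_lt.mp h2) (not_lt.mp h1)
        rcases hp with hp | ⟨hp1, hp2⟩
        · exact Or.inl hp
        · rcases hq with hq | ⟨hq1, hq2⟩
          · exact Or.inl (lt_of_eq_of_lt hfq hq)
          · exact Or.inr ⟨hp1, sup_le hp2 hq2⟩
    inf_le_left := fun p q => by
      try dsimp only
      split_ifs with h1 h2
      · exact le_rfl
      · exact Or.inl h2
      · exact Or.inr ⟨rfl, inf_le_left⟩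
    inf_le_right := fun p q => by
      try dsimp only
      split_ifs with h1 h2
      · exact Or.inl h1
      · exact le_rfl
      · exact Or.inr ⟨le_antisymm (not_lt.mp h2) (not_lt.mp h1), inf_le_right⟩
    le_inf := fun p q r hq hr => by
      try dsimp only
      split_ifs with h1 h2
      · exact hq
      · exact hr
      · have hfq : q.fst = r.fst := le_antisymm (not_lt.mp h2) (not_lt.mp h1)
        rcases hq with hq | ⟨hq1, hq2⟩
        · exact Or.inl hq
        · rcases hr with hr | ⟨hr1, hr2⟩
          · exact Or.inl (lt_of_lt_of_eq hr hfq.symm)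
          · exact Or.inr ⟨hq1, le_inf hq2 hr2⟩ }

end Order

section Covariant

variable [AddCommGroup H] [LinearOrder H] [IsOrderedAddMonoid H] [Lattice G] [AddGroup G]
  [CovariantClass G G (· + ·) (· ≤ ·)] [CovariantClass G G (Function.swap (· + ·)) (· ≤ ·)]

instance : CovariantClass (LexProd H G) (LexProd H G) (· + ·) (· ≤ ·) := by
  constructor
  rintro a x y (h | ⟨h1, h2⟩)
  · exact Or.inl (add_lt_add_right h a.fst)
  · exact Or.inr ⟨by simp [h1], add_le_add_right h2 a.snd⟩

instance : CovariantClass (LexProd H G) (LexProd H G) (Function.swap (· + ·)) (· ≤ ·) := by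
  constructor
  rintro a x y (h | ⟨h1, h2⟩)
  · exact Or.inl (add_lt_add_left h a.fst)
  · exact Or.inr ⟨by simp [h1], add_le_add_left h2 a.snd⟩

end Covariant

end LexProd

/-! ### Bundled lattice-ordered groups and linearly ordered unital abelian groups -/

universe u

/-- A bundled (not necessarily abelian) lattice-ordered group. -/
structure LGroupS : Type (u + 1) where
  carrier : Type u
  [lat : Lattice carrier]
  [grp : AddGroup carrier]
  [cov_left : CovariantClass carrier carrier (· + ·) (· ≤ ·)]
  [cov_right : CovariantClass carrier carrier (Function.swap (· + ·)) (· ≤ ·)]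

attribute [instance] LGroupS.lat LGroupS.grp LGroupS.cov_left LGroupS.cov_right

/-- A bundled linearly ordered abelian group with a strong unit. -/
structure LoGroupU : Type (u + 1) where
  carrier : Type u
  [strGrp : AddCommGroup carrier]
  [strOrd : LinearOrder carrier]
  [strIsOrd : IsOrderedAddMonoid carrier]
  unit : carrier
  isStrongUnit : IsStrongUnit unit

attribute [instance] LoGroupU.strGrp LoGroupU.strOrd LoGroupU.strIsOrd

/-- A lexicographic pseudo MV-algebra: one isomorphic to `Γ(H ×ₗ G, (u,0))` for some
linearly ordered abelian group `H` with strong unit `u` and some ℓ-group `G`. -/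
def IsLexicographicPMV.{u₁, u₂, u₃} {K : Type u₃} [Lattice K] [AddGroup K] (v : K) : Prop :=
  ∃ (Hs : LoGroupU.{u₁}) (Gs : LGroupS.{u₂}),
    PMVIsomorphic v (LexProd.mk Hs.unit (0 : Gs.carrier))

end PseudoMV

/-! The index map `x ↦ t` (for `x ∈ M_t`) is monotone and additive on defined sums, so `M_0` is
an ideal. An ideal containing some `x ∈ M_t` with `t > 0` contains `n.x ∈ M_u` and hence `1`
once `u ≤ n • t`; conversely, if some `t > 0` has `n • t < u` for all `n`, the classes of the
infinitesimal indices form a larger proper ideal. So `M_0` is maximal iff `u > 0` and `H` is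
archimedean (`u` being a strong unit), iff `(H,u)` embeds in `(ℝ,1)` by Hölder's theorem.

For a state `s`, `x~ ⊕ y ∈ M_u` for `x, y ∈ M_t` shows that `s` is constant on classes, and then
additive across them. Two states therefore differ by a bounded function `h` on `[0,u]_H` that is
additive there with `h u = 0`; in an archimedean group such an `h` vanishes, because
`|h| ≤ 2 sup_{[0,r)} |h|` for every `r > 0`, while `|h| ≤ 1/n` on `[0,r)` whenever `n • r ≤ u`. -/

namespace PseudoMV

theorem nonpos_of_forall_nat_mul_le {a C : ℝ} (h : ∀ n : ℕ, n * a ≤ C) : a ≤ 0 := by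
  by_contra! ha
  obtain ⟨n, hn⟩ := exists_nat_gt (C / a)
  rw [div_lt_iff₀ ha] at hn
  linarith [h n]

section OrderedGroup

variable {H : Type*} [AddCommGroup H] [LinearOrder H] [IsOrderedAddMonoid H] {u t : H}

theorem sub_mem_Icc_zero (ht : t ∈ Icc 0 u) : u - t ∈ Icc 0 u :=
  ⟨sub_nonneg.2 ht.2, sub_le_self u ht.1⟩

theorem archimedean_of_forall_le_nsmul (hu : IsStrongUnit u)
    (h : ∀ t : H, 0 < t → ∃ n : ℕ, u ≤ n • t) : Archimedean H where
  arch x t ht := by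
    obtain ⟨m, hm⟩ := h t ht
    obtain ⟨k, hk⟩ := hu.2 x
    exact ⟨m * k, hk.trans <| (nsmul_le_nsmul_right hm k).trans_eq (mul_nsmul t m k).symm⟩

theorem exists_orderEmbedding_real_iff :
    (∃ f : H →+ ℝ, (∀ a b : H, a ≤ b ↔ f a ≤ f b) ∧ f u = 1) ↔ 0 < u ∧ Archimedean H := by
  constructor
  · rintro ⟨f, hf, hfu⟩
    have hmono : StrictMono f := strictMono_of_le_iff_le hf
    exact ⟨hmono.lt_iff_lt.1 (by simp [hfu]), Archimedean.comap f hmono⟩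
  · rintro ⟨hu, _⟩
    let _ : One H := ⟨u⟩
    have : ZeroLEOneClass H := ⟨hu.le⟩
    have : NeZero (1 : H) := ⟨hu.ne'⟩
    exact ⟨(Archimedean.embedReal H).toAddMonoidHom,
      fun a b => (Archimedean.embedRealFun_strictMono H).le_iff_le.symm, Archimedean.embedReal_one⟩

theorem exists_nsmul_le_lt_succ_nsmul [Archimedean H] {r : H} (hr : 0 < r) (ht : 0 ≤ t) :
    ∃ k : ℕ, k • r ≤ t ∧ t < (k + 1) • r := by
  obtain ⟨k, ⟨hkt, htk⟩, -⟩ := existsUnique_zsmul_near_of_pos hr t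
  have hk : 0 ≤ k := by
    by_contra! hk
    have : (k + 1) • r ≤ (0 : ℤ) • r := zsmul_le_zsmul_left hr.le (by omega)
    exact (ht.trans_lt htk).not_ge (by simpa using this)
  lift k to ℕ using hk
  exact ⟨k, by simpa using hkt, by exact_mod_cast htk⟩

theorem exists_pos_forall_nsmul_le (hu : 0 < u) (n : ℕ) :
    ∃ r > 0, ∀ s, 0 ≤ s → s < r → n • s ≤ u := by
  have key : ∀ k : ℕ, ∃ r > 0, ∀ s, 0 ≤ s → s < r → 2 ^ k • s ≤ u := by
    intro k
    induction k with
    | zero => exact ⟨u, hu, fun s _ hs => by simpa using hs.le⟩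
    | succ k ih =>
      obtain ⟨r, hr, hsmall⟩ := ih
      -- halve `r` by `min a (r - a)` for some `a ∈ (0, r)`; if there is none, `[0, r) = {0}`
      by_cases hgap : ∃ a, 0 < a ∧ a < r
      · obtain ⟨a, ha, har⟩ := hgap
        refine ⟨min a (r - a), lt_min ha (sub_pos.2 har), fun s hs0 hs => ?_⟩
        have hss : s + s < r := calc
          s + s < a + (r - a) :=
            add_lt_add (hs.trans_le (min_le_left _ _)) (hs.trans_le (min_le_right _ _))
          _ = r := add_sub_cancel a r
        rw [pow_succ, mul_nsmul', two_nsmul]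
        exact hsmall (s + s) (add_nonneg hs0 hs0) hss
      · simp only [not_exists, not_and, not_lt] at hgap
        refine ⟨r, hr, fun s hs0 hs => ?_⟩
        obtain rfl : s = 0 := le_antisymm (not_lt.1 fun h => (hgap s h).not_gt hs) hs0
        simpa using hu.le
  obtain ⟨r, hr, hsmall⟩ := key n
  exact ⟨r, hr, fun s hs0 hs =>
    (nsmul_le_nsmul_left hs0 Nat.lt_two_pow_self.le).trans (hsmall s hs0 hs)⟩

def PartiallyAdditive (u : H) (h : H → ℝ) : Prop :=
  ∀ s t : H, 0 ≤ s → 0 ≤ t → s + t ≤ u → h (s + t) = h s + h t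

namespace PartiallyAdditive

variable {h : H → ℝ}

theorem map_nsmul (hh : PartiallyAdditive u h) (ht : 0 ≤ t) {n : ℕ} (hn : n • t ≤ u) :
    h (n • t) = n * h t := by
  induction n with
  | zero => simpa using hh 0 0 le_rfl le_rfl (by simpa using hn)
  | succ n ih =>
    have hle : n • t ≤ u := (nsmul_le_nsmul_left ht n.le_succ).trans hn
    rw [succ_nsmul] at hn ⊢
    rw [hh _ _ (nsmul_nonneg ht n) ht hn, ih hle]
    push_cast
    ring

/-- Writing `t = k • r + σ` and `u = m • r + ρ` with remainders `σ, ρ < r` gives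
`k * |h r| ≤ m * |h r| = |h ρ|`. -/
theorem abs_le_two_mul [Archimedean H] (hh : PartiallyAdditive u h) (hhu : h u = 0)
    {r : H} {ε : ℝ} (hr : 0 < r) (hsmall : ∀ s, 0 ≤ s → s < r → |h s| ≤ ε)
    (ht : t ∈ Icc 0 u) : |h t| ≤ 2 * ε := by
  have hε : 0 ≤ ε := (abs_nonneg _).trans (hsmall 0 le_rfl hr)
  rcases lt_or_ge u r with hur | hru
  · linarith [hsmall t ht.1 (ht.2.trans_lt hur)]
  have hrem : ∀ a : H, ∀ k : ℕ, k • r ≤ a → a < (k + 1) • r → a ≤ u →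
      h a = k * h r + h (a - k • r) ∧ |h (a - k • r)| ≤ ε := by
    intro a k hka hak hau
    refine ⟨?_, hsmall _ (sub_nonneg.2 hka) ?_⟩
    · have := hh (k • r) (a - k • r) (nsmul_nonneg hr.le k) (sub_nonneg.2 hka) (by simpa using hau)
      rwa [add_sub_cancel, hh.map_nsmul hr.le (hka.trans hau)] at this
    · rw [sub_lt_iff_lt_add', ← succ_nsmul]
      exact hak
  obtain ⟨k, hkt, htk⟩ := exists_nsmul_le_lt_succ_nsmul hr ht.1
  obtain ⟨m, hmu, hum⟩ := exists_nsmul_le_lt_succ_nsmul hr (hr.le.trans hru)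
  have hkm : k ≤ m := Nat.lt_succ_iff.1 <|
    (nsmul_lt_nsmul_iff_left hr).1 (hkt.trans_lt (ht.2.trans_lt hum))
  obtain ⟨htdec, htrem⟩ := hrem t k hkt htk ht.2
  obtain ⟨hudec, hurem⟩ := hrem u m hmu hum le_rfl
  have hmr : m * |h r| = |h (u - m • r)| := by
    have : (m : ℝ) * h r = -h (u - m • r) := by linarith
    rw [← Nat.abs_cast m, ← abs_mul, this, abs_neg]
  calc |h t| = |k * h r + h (t - k • r)| := by rw [htdec]
    _ ≤ k * |h r| + |h (t - k • r)| := by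
        simpa [abs_mul] using abs_add_le ((k : ℝ) * h r) (h (t - k • r))
    _ ≤ m * |h r| + ε :=
        add_le_add (mul_le_mul_of_nonneg_right (by exact_mod_cast hkm) (abs_nonneg _)) htrem
    _ ≤ 2 * ε := by linarith

theorem eq_zero [Archimedean H] (hh : PartiallyAdditive u h) (hu : 0 < u) (hhu : h u = 0)
    {B : ℝ} (hB : ∀ s ∈ Icc 0 u, |h s| ≤ B) (ht : t ∈ Icc 0 u) : h t = 0 := by
  have hbound : ∀ n : ℕ, n * |h t| ≤ 2 * B := by
    intro n
    obtain ⟨r, hr, hsmall⟩ := exists_pos_forall_nsmul_le hu n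
    have hnh : PartiallyAdditive u (fun s => n * h s) := fun s t hs ht hst => by
      simp only [hh s t hs ht hst, mul_add]
    have := hnh.abs_le_two_mul (ε := B) (by simp [hhu]) hr (fun s hs0 hs => ?_) ht
    · simpa [abs_mul] using this
    · have hns := hsmall s hs0 hs
      simpa [abs_mul, ← hh.map_nsmul hs0 hns] using hB _ ⟨nsmul_nonneg hs0 n, hns⟩
  exact abs_eq_zero.1 (le_antisymm (nonpos_of_forall_nat_mul_le hbound) (abs_nonneg _))

end PartiallyAdditive

end OrderedGroup

section Interval

variable {K : Type*} [Lattice K] [AddGroup K] {v x y : K}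

theorem negR_mem_carrier [AddLeftMono K] [AddRightMono K] (hx : x ∈ carrier v) :
    negR v x ∈ carrier v :=
  ⟨le_neg_add_iff_add_le.2 (by simpa using hx.2),
    neg_add_le_iff_le_add.2 (le_add_of_nonneg_left hx.1)⟩

theorem neg_add_mem_carrier [AddLeftMono K] [AddRightMono K] (hx : x ∈ carrier v)
    (hy : y ∈ carrier v) (hxy : x ≤ y) : -x + y ∈ carrier v :=
  ⟨le_neg_add_iff_add_le.2 (by simpa using hxy),
    neg_add_le_iff_le_add.2 ((le_add_of_nonneg_left hx.1).trans (add_le_add le_rfl hy.2))⟩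

theorem oplus_negR_self (x : K) : oplus v x (negR v x) = v := by
  rw [oplus, negR, add_neg_cancel_left, inf_idem]

namespace IsIdeal

variable {I : Set K}

theorem zero_mem (hI : IsIdeal v I) : (0 : K) ∈ I := by
  obtain ⟨b, hb⟩ := hI.nonempty
  exact hI.lower 0 ⟨le_rfl, (hI.subset hb).1.trans (hI.subset hb).2⟩ b hb (hI.subset hb).1

theorem nOplus_mem (hI : IsIdeal v I) (hx : x ∈ I) (n : ℕ) : nOplus v n x ∈ I := by
  induction n with
  | zero => exact hI.zero_mem
  | succ n ih => exact hI.oplus_mem _ ih x hx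

theorem eq_carrier_of_unit_mem (hI : IsIdeal v I) (hv : v ∈ I) : I = carrier v :=
  hI.subset.antisymm fun a ha => hI.lower a ha v hv ha.2

end IsIdeal

namespace IsState

variable {st : K → ℝ}

section

variable [AddLeftMono K]

theorem map_add (hst : IsState v st) (hx : x ∈ carrier v) (hy : y ∈ carrier v)
    (hxy : x + y ≤ v) : st (x + y) = st x + st y :=
  hst.additive x hx y hy ⟨add_nonneg hx.1 hy.1, hxy⟩

theorem map_zero (hst : IsState v st) (hv : 0 ≤ v) : st 0 = 0 := by
  simpa using hst.map_add (x := v) ⟨hv, le_rfl⟩ ⟨le_rfl, hv⟩ (by simp)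

theorem map_nsmul (hst : IsState v st) (hx : 0 ≤ x) {n : ℕ} (hn : n • x ≤ v) :
    st (n • x) = n * st x := by
  induction n with
  | zero => simpa using hst.map_zero ((nsmul_nonneg hx 0).trans hn)
  | succ n ih =>
    have hnv : n • x ≤ v := (nsmul_le_nsmul_left hx n.le_succ).trans hn
    have hxv : x ≤ v := le_trans (by simpa using nsmul_le_nsmul_left hx (Nat.succ_pos n)) hn
    rw [succ_nsmul] at hn ⊢
    rw [hst.map_add ⟨nsmul_nonneg hx n, hnv⟩ ⟨hx, hxv⟩ hn, ih hnv]
    push_cast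
    ring

theorem eq_zero_of_forall_nsmul_le (hst : IsState v st) (hx : 0 ≤ x)
    (h : ∀ n : ℕ, n • x ≤ v) : st x = 0 := by
  have hxc : x ∈ carrier v := ⟨hx, by simpa using h 1⟩
  refine le_antisymm (nonpos_of_forall_nat_mul_le (C := 1) fun n => ?_) (hst.maps_to x hxc).1
  rw [← hst.map_nsmul hx (h n)]
  exact (hst.maps_to _ ⟨nsmul_nonneg hx n, h n⟩).2

end

variable [AddLeftMono K] [AddRightMono K]

theorem map_eq_add_map_neg_add (hst : IsState v st) (hx : x ∈ carrier v) (hy : y ∈ carrier v)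
    (hxy : x ≤ y) : st y = st x + st (-x + y) := by
  rw [← hst.map_add hx (neg_add_mem_carrier hx hy hxy) (by rw [add_neg_cancel_left]; exact hy.2),
    add_neg_cancel_left]

theorem mono (hst : IsState v st) (hx : x ∈ carrier v) (hy : y ∈ carrier v) (hxy : x ≤ y) :
    st x ≤ st y := by
  rw [hst.map_eq_add_map_neg_add hx hy hxy]
  linarith [(hst.maps_to _ (neg_add_mem_carrier hx hy hxy)).1]

theorem map_oplus_le (hst : IsState v st) (hx : x ∈ carrier v) (hy : y ∈ carrier v) :
    st (oplus v x y) ≤ st x + st y := by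
  have hxz : x ≤ oplus v x y := le_inf (le_add_of_nonneg_right hy.1) hx.2
  have hz : oplus v x y ∈ carrier v := ⟨hx.1.trans hxz, inf_le_right⟩
  rw [hst.map_eq_add_map_neg_add hx hz hxz]
  exact add_le_add le_rfl <|
    hst.mono (neg_add_mem_carrier hx hz hxz) hy (neg_add_le_iff_le_add.2 inf_le_left)

theorem map_add_negR (hst : IsState v st) (hx : x ∈ carrier v) : st x + st (negR v x) = 1 := by
  rw [← hst.map_add hx (negR_mem_carrier hx) (by rw [negR, add_neg_cancel_left]), negR,
    add_neg_cancel_left, hst.map_unit]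

end IsState

end Interval

namespace IsDecomposition

variable {H : Type*} [AddCommGroup H] [LinearOrder H]
  {K : Type*} [Lattice K] [AddGroup K] {u s t : H} {v x y : K} {Md : H → Set K}

theorem eq_of_mem (hMd : IsDecomposition u v Md) (hs : s ∈ Icc 0 u) (ht : t ∈ Icc 0 u)
    (hxs : x ∈ Md s) (hxt : x ∈ Md t) : s = t := by
  by_contra hne
  exact eq_empty_iff_forall_notMem.1 (hMd.disjoint s hs t ht hne) x ⟨hxs, hxt⟩

theorem le_of_le (hMd : IsDecomposition u v Md) (hs : s ∈ Icc 0 u) (ht : t ∈ Icc 0 u)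
    (hx : x ∈ Md s) (hy : y ∈ Md t) (hxy : x ≤ y) : s ≤ t := by
  by_contra! hts
  rw [le_antisymm hxy (hMd.mono t ht s hs hts y hy x hx)] at hx
  exact hts.ne (hMd.eq_of_mem ht hs hy hx)

theorem zero_le_unit (hMd : IsDecomposition u v Md) (hu : 0 ≤ u) : 0 ≤ v := by
  obtain ⟨a, ha⟩ := hMd.nonempty 0 ⟨le_rfl, hu⟩
  exact (hMd.subset 0 ⟨le_rfl, hu⟩ ha).1.trans (hMd.subset 0 ⟨le_rfl, hu⟩ ha).2

theorem zero_mem (hMd : IsDecomposition u v Md) (hu : 0 ≤ u) : (0 : K) ∈ Md 0 := by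
  obtain ⟨t, ht, h0t⟩ := hMd.cover 0 ⟨le_rfl, hMd.zero_le_unit hu⟩
  obtain ⟨a, ha⟩ := hMd.nonempty 0 ⟨le_rfl, hu⟩
  have ht0 : t ≤ 0 := hMd.le_of_le ht ⟨le_rfl, hu⟩ h0t ha (hMd.subset 0 ⟨le_rfl, hu⟩ ha).1
  rwa [le_antisymm ht0 ht.1] at h0t

theorem negL_mem (hMd : IsDecomposition u v Md) (ht : t ∈ Icc 0 u) (hx : x ∈ Md t) :
    negL v x ∈ Md (u - t) :=
  hMd.negL_eq t ht ▸ mem_image_of_mem _ hx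

theorem negR_mem (hMd : IsDecomposition u v Md) (ht : t ∈ Icc 0 u) (hx : x ∈ Md t) :
    negR v x ∈ Md (u - t) :=
  hMd.negR_eq t ht ▸ mem_image_of_mem _ hx

theorem unit_mem (hMd : IsDecomposition u v Md) (hu : 0 ≤ u) : v ∈ Md u := by
  simpa [negL] using hMd.negL_mem ⟨le_rfl, hu⟩ (hMd.zero_mem hu)

theorem isIdeal_biUnion (hMd : IsDecomposition u v Md) {S : Set H} (hS : S ⊆ Icc 0 u)
    (h0 : 0 ∈ S) (hlower : ∀ s ∈ Icc 0 u, ∀ t ∈ S, s ≤ t → s ∈ S)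
    (hadd : ∀ s ∈ S, ∀ t ∈ S, min (s + t) u ∈ S) : IsIdeal v (⋃ t ∈ S, Md t) where
  subset := iUnion₂_subset fun t ht => hMd.subset t (hS ht)
  nonempty := (hMd.nonempty 0 (hS h0)).mono (subset_biUnion_of_mem h0)
  lower a ha b hb hab := by
    obtain ⟨t, ht, hbt⟩ := mem_iUnion₂.1 hb
    obtain ⟨s, hs, has⟩ := hMd.cover a ha
    exact mem_biUnion (hlower s hs t ht (hMd.le_of_le hs (hS ht) has hbt hab)) has
  oplus_mem a ha b hb := by
    obtain ⟨s, hs, has⟩ := mem_iUnion₂.1 ha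
    obtain ⟨t, ht, hbt⟩ := mem_iUnion₂.1 hb
    exact mem_biUnion (hadd s hs t ht) (hMd.oplus_mem s (hS hs) t (hS ht) a has b hbt)

theorem isIdeal_zero (hMd : IsDecomposition u v Md) (hu : 0 ≤ u) : IsIdeal v (Md 0) := by
  simpa using hMd.isIdeal_biUnion (S := {0}) (by simpa using hu) rfl
    (fun s hs t ht hst => le_antisymm (ht ▸ hst) hs.1) (fun s hs t ht => by simp_all)

theorem stateKer_comp_index (hMd : IsDecomposition u v Md) (hu : 0 ≤ u) {idx : K → H}
    (hidx : ∀ x ∈ carrier v, idx x ∈ Icc 0 u ∧ x ∈ Md (idx x)) {f : H →+ ℝ}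
    (hf : StrictMono f) : stateKer v (fun x => f (idx x)) = Md 0 := by
  ext x
  refine ⟨fun ⟨hx, hfx⟩ => ?_, fun hx => ⟨hMd.subset 0 ⟨le_rfl, hu⟩ hx, ?_⟩⟩
  · rw [← map_zero f] at hfx
    simpa [hf.injective hfx] using (hidx x hx).2
  · have hxI := hidx x (hMd.subset 0 ⟨le_rfl, hu⟩ hx)
    simp only [hMd.eq_of_mem hxI.1 ⟨le_rfl, hu⟩ hxI.2 hx, map_zero]

variable [IsOrderedAddMonoid H]

theorem nOplus_mem (hMd : IsDecomposition u v Md) (ht : t ∈ Icc 0 u) (hx : x ∈ Md t) (n : ℕ) :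
    nOplus v n x ∈ Md (min (n • t) u) := by
  have hu : 0 ≤ u := ht.1.trans ht.2
  induction n with
  | zero => simpa [nOplus, min_eq_left hu] using hMd.zero_mem hu
  | succ n ih =>
    have := hMd.oplus_mem _ ⟨le_min (nsmul_nonneg ht.1 n) hu, min_le_right _ _⟩ t ht _ ih x hx
    rwa [← min_add_add_right, min_assoc, min_eq_right (le_add_of_nonneg_right ht.1),
      ← succ_nsmul] at this

theorem isIdeal_biUnion_infinitesimal (hMd : IsDecomposition u v Md) (hu : 0 ≤ u) :
    IsIdeal v (⋃ t ∈ {t ∈ Icc 0 u | ∀ n : ℕ, n • t ≤ u}, Md t) := by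
  refine hMd.isIdeal_biUnion (sep_subset _ _) ⟨⟨le_rfl, hu⟩, by simpa using hu⟩
    (fun s hs t ht hst => ⟨hs, fun n => (nsmul_le_nsmul_right hst n).trans (ht.2 n)⟩)
    (fun s hs t ht => ?_)
  have hmax : ∀ n : ℕ, n • max s t ≤ u := by
    rcases max_choice s t with h | h <;> rw [h]
    exacts [hs.2, ht.2]
  have hst : ∀ n : ℕ, n • (s + t) ≤ u := fun n => calc
    n • (s + t) ≤ n • max s t + n • max s t := by
      rw [nsmul_add]
      exact add_le_add (nsmul_le_nsmul_right (le_max_left s t) n)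
        (nsmul_le_nsmul_right (le_max_right s t) n)
    _ = (n + n) • max s t := (add_nsmul _ n n).symm
    _ ≤ u := hmax _
  rw [min_eq_left (by simpa using hst 1)]
  exact ⟨⟨add_nonneg hs.1.1 ht.1.1, by simpa using hst 1⟩, hst⟩

theorem isMaximalIdeal_zero [Archimedean H] (hMd : IsDecomposition u v Md) (hu : 0 < u) :
    IsMaximalIdeal v (Md 0) := by
  have hu₀ : (0 : H) ∈ Icc 0 u := ⟨le_rfl, hu.le⟩
  have huu : u ∈ Icc 0 u := ⟨hu.le, le_rfl⟩
  refine ⟨hMd.isIdeal_zero hu.le, fun h => ?_, fun J hJ hsub hne => ?_⟩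
  · have hv : v ∈ Md 0 := h ▸ ⟨hMd.zero_le_unit hu.le, le_rfl⟩
    exact hu.ne (hMd.eq_of_mem hu₀ huu hv (hMd.unit_mem hu.le))
  refine Subset.antisymm (fun x hxJ => ?_) hsub
  by_contra hx
  obtain ⟨t, ht, hxt⟩ := hMd.cover x (hJ.subset hxJ)
  have ht0 : 0 < t := ht.1.lt_of_ne fun h => hx (h ▸ hxt)
  obtain ⟨n, hn⟩ := Archimedean.arch u ht0
  have hz : nOplus v n x ∈ Md u := by simpa [min_eq_right hn] using hMd.nOplus_mem ht hxt n
  have hz' : negR v (nOplus v n x) ∈ Md 0 := by simpa using hMd.negR_mem huu hz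
  have hvJ := hJ.oplus_mem _ (hJ.nOplus_mem hxJ n) _ (hsub hz')
  rw [oplus_negR_self] at hvJ
  exact hne (hJ.eq_carrier_of_unit_mem hvJ)

theorem exists_le_nsmul_of_isMaximalIdeal (hMd : IsDecomposition u v Md) (hu : 0 ≤ u)
    (hmax : IsMaximalIdeal v (Md 0)) : 0 < u ∧ ∀ t : H, 0 < t → ∃ n : ℕ, u ≤ n • t := by
  have hpos : 0 < u := by
    refine hu.lt_of_ne fun h => hmax.2.1 <| (hMd.isIdeal_zero hu).subset.antisymm fun x hx => ?_
    obtain ⟨t, ht, hxt⟩ := hMd.cover x hx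
    rwa [le_antisymm (h ▸ ht.2) ht.1] at hxt
  refine ⟨hpos, fun t ht => ?_⟩
  by_contra! hsmall
  have hJ := hmax.2.2 _ (hMd.isIdeal_biUnion_infinitesimal hu)
    (fun x hx => mem_biUnion ⟨⟨le_rfl, hu⟩, by simpa using hu⟩ hx) fun h => ?_
  · have htI : t ∈ Icc 0 u := ⟨ht.le, by simpa using (hsmall 1).le⟩
    obtain ⟨x, hx⟩ := hMd.nonempty t htI
    have hx0 : x ∈ Md 0 := hJ ▸ mem_biUnion ⟨htI, fun n => (hsmall n).le⟩ hx
    exact ht.ne (hMd.eq_of_mem ⟨le_rfl, hu⟩ htI hx0 hx)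
  · have hv : v ∈ carrier v := ⟨hMd.zero_le_unit hu, le_rfl⟩
    rw [← h, mem_iUnion₂] at hv
    obtain ⟨s, hs, hvs⟩ := hv
    rw [hMd.eq_of_mem hs.1 ⟨hu, le_rfl⟩ hvs (hMd.unit_mem hu)] at hs
    have := hs.2 2
    rw [two_nsmul] at this
    exact hpos.not_ge (by simpa using this)

theorem isMaximalIdeal_zero_iff (hMd : IsDecomposition u v Md) (hu : IsStrongUnit u) :
    IsMaximalIdeal v (Md 0) ↔ 0 < u ∧ Archimedean H := by
  refine ⟨fun hmax => ?_, fun ⟨hpos, _⟩ => hMd.isMaximalIdeal_zero hpos⟩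
  obtain ⟨hpos, h⟩ := hMd.exists_le_nsmul_of_isMaximalIdeal hu.1 hmax
  exact ⟨hpos, archimedean_of_forall_le_nsmul hu h⟩

variable [AddRightMono K]

theorem add_mem (hMd : IsDecomposition u v Md) (hs : s ∈ Icc 0 u) (ht : t ∈ Icc 0 u)
    (hx : x ∈ Md s) (hy : y ∈ Md t) (hxy : x + y ≤ v) : s + t ≤ u ∧ x + y ∈ Md (s + t) := by
  have hsu : s ≤ u - t :=
    hMd.le_of_le hs (sub_mem_Icc_zero ht) hx (hMd.negL_mem ht hy) (le_sub_iff_add_le.2 hxy)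
  have hsum : s + t ≤ u := le_sub_iff_add_le.1 hsu
  have := hMd.oplus_mem s hs t ht x hx y hy
  rw [min_eq_left hsum, oplus, inf_eq_left.2 hxy] at this
  exact ⟨hsum, this⟩

theorem isState_comp_index (hMd : IsDecomposition u v Md) (hu : 0 ≤ u) {idx : K → H}
    (hidx : ∀ x ∈ carrier v, idx x ∈ Icc 0 u ∧ x ∈ Md (idx x)) {f : H →+ ℝ} (hf : Monotone f)
    (hfu : f u = 1) : IsState v (fun x => f (idx x)) where
  maps_to x hx := ⟨map_zero f ▸ hf (hidx x hx).1.1, hfu ▸ hf (hidx x hx).1.2⟩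
  map_unit := by
    have hv := hidx v ⟨hMd.zero_le_unit hu, le_rfl⟩
    rw [hMd.eq_of_mem hv.1 ⟨hu, le_rfl⟩ hv.2 (hMd.unit_mem hu), hfu]
  additive x hx y hy hxy := by
    obtain ⟨hsum, hmem⟩ := hMd.add_mem (hidx x hx).1 (hidx y hy).1 (hidx x hx).2 (hidx y hy).2 hxy.2
    rw [hMd.eq_of_mem (hidx _ hxy).1 ⟨add_nonneg (hidx x hx).1.1 (hidx y hy).1.1, hsum⟩
      (hidx _ hxy).2 hmem, map_add]

theorem nsmul_mem (hMd : IsDecomposition u v Md) (ht : t ∈ Icc 0 u) (hx : x ∈ Md t) {n : ℕ}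
    (hn : n • t < u) : n • x ∈ Md (n • t) := by
  induction n with
  | zero => simpa using hMd.zero_mem (ht.1.trans ht.2)
  | succ n ih =>
    simp only [succ_nsmul] at hn ⊢
    have hnt : n • t < u - t := lt_sub_iff_add_lt.2 hn
    have hnu : n • t < u := hnt.trans_le (sub_le_self u ht.1)
    have hnI : n • t ∈ Icc 0 u := ⟨nsmul_nonneg ht.1 n, hnu.le⟩
    have hle : n • x ≤ negL v x :=
      hMd.mono _ hnI _ (sub_mem_Icc_zero ht) hnt _ (ih hnu) _ (hMd.negL_mem ht hx)
    exact (hMd.add_mem hnI ht (ih hnu) hx (le_sub_iff_add_le.1 hle)).2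

variable [AddLeftMono K]

theorem neg_add_mem (hMd : IsDecomposition u v Md) (hs : s ∈ Icc 0 u) (ht : t ∈ Icc 0 u)
    (hst : s < t) (hx : x ∈ Md s) (hy : y ∈ Md t) : -x + y ∈ Md (t - s) := by
  have hyc := hMd.subset t ht hy
  have hd := neg_add_mem_carrier (hMd.subset s hs hx) hyc (hMd.mono s hs t ht hst x hx y hy)
  obtain ⟨r, hr, hdr⟩ := hMd.cover _ hd
  obtain ⟨hsr, hy'⟩ := hMd.add_mem hs hr hx hdr (by rw [add_neg_cancel_left]; exact hyc.2)
  rw [add_neg_cancel_left] at hy'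
  rwa [hMd.eq_of_mem ht ⟨add_nonneg hs.1 hr.1, hsr⟩ hy hy', add_sub_cancel_left]

variable {st st₁ st₂ : K → ℝ}

theorem exists_le_nsmul_of_stateKer (hMd : IsDecomposition u v Md) (hu : 0 ≤ u)
    (hst : IsState v st) (hker : stateKer v st = Md 0) :
    0 < u ∧ ∀ t : H, 0 < t → ∃ n : ℕ, u ≤ n • t := by
  have hpos : 0 < u := by
    refine hu.lt_of_ne fun h => ?_
    have hv : v ∈ stateKer v st := hker ▸ h ▸ hMd.unit_mem hu
    simp [stateKer, hst.map_unit] at hv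
  refine ⟨hpos, fun t ht => ?_⟩
  by_contra! hsmall
  have htI : t ∈ Icc 0 u := ⟨ht.le, by simpa using (hsmall 1).le⟩
  obtain ⟨x, hx⟩ := hMd.nonempty t htI
  have hxc := hMd.subset t htI hx
  have hx0 : x ∈ Md 0 := hker ▸ ⟨hxc, hst.eq_zero_of_forall_nsmul_le hxc.1 fun n =>
    (hMd.subset _ ⟨nsmul_nonneg ht.le n, (hsmall n).le⟩ (hMd.nsmul_mem htI hx (hsmall n))).2⟩
  exact ht.ne (hMd.eq_of_mem ⟨le_rfl, hu⟩ htI hx0 hx)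

theorem state_eq_zero_of_mem_zero (hMd : IsDecomposition u v Md) (hu : 0 < u)
    (hst : IsState v st) (hx : x ∈ Md 0) : st x = 0 := by
  have hu₀ : (0 : H) ∈ Icc 0 u := ⟨le_rfl, hu.le⟩
  refine hst.eq_zero_of_forall_nsmul_le (hMd.subset 0 hu₀ hx).1 fun n => ?_
  have := hMd.nsmul_mem hu₀ hx (n := n) (by simpa using hu)
  exact (hMd.subset 0 hu₀ (by simpa using this)).2

theorem state_eq_one_of_mem_unit (hMd : IsDecomposition u v Md) (hu : 0 < u)
    (hst : IsState v st) (hx : x ∈ Md u) : st x = 1 := by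
  have huu : u ∈ Icc 0 u := ⟨hu.le, le_rfl⟩
  have h0 := hMd.state_eq_zero_of_mem_zero hu hst (by simpa using hMd.negR_mem huu hx)
  linarith [hst.map_add_negR (hMd.subset u huu hx)]

/-- `x~ ⊕ y ∈ M_u` has state `1`, so subadditivity gives `st x ≤ st y`. -/
theorem state_eq_of_mem (hMd : IsDecomposition u v Md) (hu : 0 < u) (hst : IsState v st)
    (ht : t ∈ Icc 0 u) (hx : x ∈ Md t) (hy : y ∈ Md t) : st x = st y := by
  suffices h : ∀ x y, x ∈ Md t → y ∈ Md t → st x ≤ st y from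
    le_antisymm (h x y hx hy) (h y x hy hx)
  intro x y hx hy
  have hxc := hMd.subset t ht hx
  have hz := hMd.oplus_mem _ (sub_mem_Icc_zero ht) t ht _ (hMd.negR_mem ht hx) y hy
  rw [sub_add_cancel, min_self] at hz
  have h1 := hMd.state_eq_one_of_mem_unit hu hst hz
  linarith [hst.map_oplus_le (negR_mem_carrier hxc) (hMd.subset t ht hy), hst.map_add_negR hxc]

theorem state_add_of_mem (hMd : IsDecomposition u v Md) (hu : 0 < u) (hst : IsState v st)
    (hs : 0 ≤ s) (ht : 0 ≤ t) (hstu : s + t ≤ u) (hx : x ∈ Md s) (hy : y ∈ Md t) {z : K}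
    (hz : z ∈ Md (s + t)) : st z = st x + st y := by
  have hsI : s ∈ Icc 0 u := ⟨hs, (le_add_of_nonneg_right ht).trans hstu⟩
  have htI : t ∈ Icc 0 u := ⟨ht, (le_add_of_nonneg_left hs).trans hstu⟩
  have hstI : s + t ∈ Icc 0 u := ⟨add_nonneg hs ht, hstu⟩
  rcases ht.eq_or_lt with rfl | ht0
  · rw [add_zero] at hz
    rw [hMd.state_eq_zero_of_mem_zero hu hst hy, add_zero]
    exact hMd.state_eq_of_mem hu hst hsI hz hx
  have hd := hMd.neg_add_mem hsI hstI (lt_add_of_pos_right s ht0) hx hz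
  rw [add_sub_cancel_left] at hd
  have hxz := hMd.mono s hsI _ hstI (lt_add_of_pos_right s ht0) x hx z hz
  rw [hst.map_eq_add_map_neg_add (hMd.subset s hsI hx) (hMd.subset _ hstI hz) hxz,
    hMd.state_eq_of_mem hu hst htI hd hy]

theorem state_unique [Archimedean H] (hMd : IsDecomposition u v Md) (hu : 0 < u)
    (hst₁ : IsState v st₁) (hst₂ : IsState v st₂) (hx : x ∈ carrier v) : st₁ x = st₂ x := by
  choose! rep hrep using hMd.nonempty
  set h : H → ℝ := fun t => st₁ (rep t) - st₂ (rep t)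
  have hadd : PartiallyAdditive u h := fun s t hs ht hstu => by
    have hsI : s ∈ Icc 0 u := ⟨hs, (le_add_of_nonneg_right ht).trans hstu⟩
    have htI : t ∈ Icc 0 u := ⟨ht, (le_add_of_nonneg_left hs).trans hstu⟩
    have hstI : s + t ∈ Icc 0 u := ⟨add_nonneg hs ht, hstu⟩
    simp only [h, hMd.state_add_of_mem hu hst₁ hs ht hstu (hrep s hsI) (hrep t htI) (hrep _ hstI),
      hMd.state_add_of_mem hu hst₂ hs ht hstu (hrep s hsI) (hrep t htI) (hrep _ hstI)]
    ring
  have huu : u ∈ Icc 0 u := ⟨hu.le, le_rfl⟩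
  have hhu : h u = 0 := by
    simp only [h, hMd.state_eq_one_of_mem_unit hu hst₁ (hrep u huu),
      hMd.state_eq_one_of_mem_unit hu hst₂ (hrep u huu), sub_self]
  have hB : ∀ s ∈ Icc 0 u, |h s| ≤ 1 := fun s hs => by
    have h₁ := hst₁.maps_to _ (hMd.subset s hs (hrep s hs))
    have h₂ := hst₂.maps_to _ (hMd.subset s hs (hrep s hs))
    exact abs_sub_le_iff.2 ⟨by linarith [h₁.2, h₂.1], by linarith [h₁.1, h₂.2]⟩
  obtain ⟨t, ht, hxt⟩ := hMd.cover x hx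
  have := hadd.eq_zero hu hhu hB ht
  rw [hMd.state_eq_of_mem hu hst₁ ht hxt (hrep t ht), hMd.state_eq_of_mem hu hst₂ ht hxt (hrep t ht)]
  linarith

end IsDecomposition

end PseudoMV

open PseudoMV in
theorem stmt_4_general {H : Type*} [AddCommGroup H] [LinearOrder H] [IsOrderedAddMonoid H] {K : Type*} [Lattice K] [AddGroup K]
    [CovariantClass K K (· + ·) (· ≤ ·)] [CovariantClass K K (Function.swap (· + ·)) (· ≤ ·)]
    (u : H) (hu : IsStrongUnit u) (v : K)
    (Md : H → Set K) (hMd : IsDecomposition u v Md) :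
    (IsMaximalIdeal v (Md 0) ↔
      ∃ f : H →+ ℝ, (∀ a b : H, a ≤ b ↔ f a ≤ f b) ∧ f u = 1) ∧
    (IsMaximalIdeal v (Md 0) ↔
      ∃ st : K → ℝ, IsState v st ∧ stateKer v st = Md 0 ∧
        ∀ st' : K → ℝ, IsState v st' → ∀ x ∈ carrier v, st' x = st x) := by
  rw [hMd.isMaximalIdeal_zero_iff hu]
  refine ⟨exists_orderEmbedding_real_iff.symm, fun ⟨hpos, harch⟩ => ?_,
    fun ⟨st, hst, hker, _⟩ => ?_⟩
  · obtain ⟨f, hf, hfu⟩ := exists_orderEmbedding_real_iff.2 ⟨hpos, harch⟩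
    have hmono : StrictMono f := strictMono_of_le_iff_le hf
    choose! idx hidx using hMd.cover
    have hst := hMd.isState_comp_index hu.1 hidx hmono.monotone hfu
    exact ⟨_, hst, hMd.stateKer_comp_index hu.1 hidx hmono,
      fun st' hst' x hx => hMd.state_unique hpos hst' hst hx⟩
  · obtain ⟨hpos, h⟩ := hMd.exists_le_nsmul_of_stateKer hu.1 hst hker
    exact ⟨hpos, archimedean_of_forall_le_nsmul hu h⟩

open PseudoMV in
/-- Theorem 3.4: `M₀` is maximal iff `(H,u)` embeds as a unital ordered group onto a
subgroup `(ℍ,1)` of `(ℝ,1)` iff `M` has a unique state `s` with `Ker(s) = M₀`. -/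
theorem stmt_4 {H : Type*} [AddCommGroup H] [LinearOrder H] [IsOrderedAddMonoid H] {K : Type*} [Lattice K] [AddGroup K]
    [CovariantClass K K (· + ·) (· ≤ ·)] [CovariantClass K K (Function.swap (· + ·)) (· ≤ ·)]
    (u : H) (hu : IsStrongUnit u) (v : K) (hv : IsStrongUnit v)
    (Md : H → Set K) (hMd : IsDecomposition u v Md) :
    (IsMaximalIdeal v (Md 0) ↔
      ∃ f : H →+ ℝ, (∀ a b : H, a ≤ b ↔ f a ≤ f b) ∧ f u = 1) ∧
    (IsMaximalIdeal v (Md 0) ↔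
      ∃ st : K → ℝ, IsState v st ∧ stateKer v st = Md 0 ∧
        ∀ st' : K → ℝ, IsState v st' → ∀ x ∈ carrier v, st' x = st x) :=
  stmt_4_general u hu v Md hMd
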